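/- arXiv:1904.09872 — 3 statements merged into one kernel-verified Lean document; each statement's English description precedes it below -/
import Mathlib

section
/- Let L ≥ 1, and for each layer ℓ ∈ Fin L let C_ℓ, m_ℓ ≥ 1. Let A be the finite set of all network configurations a = (a_1, …, a_L) where each a_ℓ : Fin m_ℓ → ℕ satisfies ∑_k a_{ℓ,k} = C_ℓ. Let ℒ : A → ℝ be an arbitrary loss function, define p(a | α) = ∏_ℓ (C_ℓ! / ∏_k a_{ℓ,k}!) · exp(∑_k α_{ℓ,k} · a_{ℓ,k}) / (∑_j exp(α_{ℓ,j}))^{C_ℓ}, and define the expected loss J(α) = ∑_{a ∈ A} p(a | α) · ℒ(a). Then for every layer ℓ, every t : Fin m_ℓ, and every parameter collection α, the partial derivative of J with respect to the coordinate α_{ℓ,t} exists and equals ∑_{a ∈ A} ℒ(a) · (a_{ℓ,t} − C_ℓ · p_{ℓ,t}(α_ℓ)) · p(a | α), where p_{ℓ,t}(α_ℓ) = exp(α_{ℓ,t}) / ∑_j exp(α_{ℓ,j}). -/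
/-!
In exponential-family form, `log p_ℓ(α_ℓ) = log (C_ℓ! / ∏ₖ a_{ℓ,k}!) + ∑ₖ α_{ℓ,k} a_{ℓ,k} - C_ℓ · log ∑ⱼ exp α_{ℓ,j}`,
and the derivative of log-sum-exp in the coordinate `α_{ℓ,t}` is the softmax `p_{ℓ,t}`. Hence
`∂p_ℓ/∂α_{ℓ,t} = (a_{ℓ,t} - C_ℓ p_{ℓ,t}) p_ℓ`; the other layer factors of `p(a | α)` do not depend on
`α_{ℓ,t}`, and `J` is a finite sum.
-/

open Finset

/-- The multinomial probability of a layer configuration `a` with `Cl` filters and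
`ml` operations, written via softmax parameters `α`. -/
noncomputable def layerProb (Cl ml : ℕ) (a : Fin ml → ℕ) (α : Fin ml → ℝ) : ℝ :=
  ((Cl.factorial : ℝ) / ∏ k, ((a k).factorial : ℝ)) *
    Real.exp (∑ k, α k * (a k)) / (∑ j, Real.exp (α j)) ^ Cl

/-- The network configuration probability: the product of the layer probabilities. -/
noncomputable def netProb (L : ℕ) (C m : Fin L → ℕ)
    (a : (ℓ : Fin L) → Fin (m ℓ) → ℕ) (α : (ℓ : Fin L) → Fin (m ℓ) → ℝ) : ℝ :=
  ∏ r, layerProb (C r) (m r) (a r) (α r)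

open Function

lemma hasDerivAt_sum_update {ι : Type*} [Fintype ι] [DecidableEq ι] (f : ι → ℝ → ℝ)
    (β : ι → ℝ) (t : ι) {f' : ℝ} (hf : HasDerivAt (f t) f' (β t)) :
    HasDerivAt (fun s => ∑ i, f i (update β t s i)) f' (β t) := by
  have h : (fun s => ∑ i, f i (update β t s i)) =
      fun s => f t s + ∑ i ∈ univ \ {t}, f i (β i) := by
    funext s
    simp only [apply_update (fun i => f i) β t s, sum_update_of_mem (mem_univ t)]
  rw [h]
  exact hf.add_const _

lemma hasDerivAt_log_sum_exp_update {ι : Type*} [Fintype ι] [DecidableEq ι]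
    (β : ι → ℝ) (t : ι) :
    HasDerivAt (fun s => Real.log (∑ j, Real.exp (update β t s j)))
      (Real.exp (β t) / ∑ j, Real.exp (β j)) (β t) := by
  have hpos : 0 < ∑ j, Real.exp (β j) :=
    sum_pos (fun j _ => Real.exp_pos _) ⟨t, mem_univ t⟩
  have := (hasDerivAt_sum_update (fun _ => Real.exp) β t (Real.hasDerivAt_exp _)).log
  simpa using this (by simpa using hpos.ne')

lemma layerProb_eq_mul_exp (Cl ml : ℕ) [Nonempty (Fin ml)] (a : Fin ml → ℕ)
    (β : Fin ml → ℝ) :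
    layerProb Cl ml a β = (Cl.factorial / ∏ k, ((a k).factorial : ℝ)) *
      Real.exp (∑ k, β k * a k - Cl * Real.log (∑ j, Real.exp (β j))) := by
  have hpos : 0 < ∑ j, Real.exp (β j) := sum_pos (fun j _ => Real.exp_pos _) univ_nonempty
  rw [layerProb, Real.exp_sub, Real.exp_nat_mul, Real.exp_log hpos, mul_div_assoc]

lemma layerProb_hasDerivAt (Cl ml : ℕ) (a : Fin ml → ℕ) (β : Fin ml → ℝ) (t : Fin ml) :
    HasDerivAt (fun s => layerProb Cl ml a (update β t s))
      (((a t : ℝ) - (Cl : ℝ) * (Real.exp (β t) / ∑ j, Real.exp (β j))) *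
        layerProb Cl ml a β) (β t) := by
  have : Nonempty (Fin ml) := ⟨t⟩
  have hlin := hasDerivAt_sum_update (fun k x => x * a k) β t ((hasDerivAt_id _).mul_const _)
  have := ((hlin.fun_sub ((hasDerivAt_log_sum_exp_update β t).const_mul (Cl : ℝ))).exp).const_mul
    ((Cl.factorial : ℝ) / ∏ k, ((a k).factorial : ℝ))
  simp only [layerProb_eq_mul_exp]
  refine this.congr_deriv ?_
  rw [update_eq_self]
  ring

lemma netProb_update (L : ℕ) (C m : Fin L → ℕ) (a : (ℓ : Fin L) → Fin (m ℓ) → ℕ)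
    (α : (ℓ : Fin L) → Fin (m ℓ) → ℝ) (ℓ : Fin L) (β : Fin (m ℓ) → ℝ) :
    netProb L C m a (update α ℓ β) = layerProb (C ℓ) (m ℓ) (a ℓ) β *
      ∏ r ∈ univ \ {ℓ}, layerProb (C r) (m r) (a r) (α r) := by
  rw [netProb, ← prod_update_of_mem (mem_univ ℓ)]
  exact prod_congr rfl fun r _ => apply_update (fun r => layerProb (C r) (m r) (a r)) α ℓ β r

lemma netProb_hasDerivAt (L : ℕ) (C m : Fin L → ℕ) (a : (ℓ : Fin L) → Fin (m ℓ) → ℕ)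
    (α : (ℓ : Fin L) → Fin (m ℓ) → ℝ) (ℓ : Fin L) (t : Fin (m ℓ)) :
    HasDerivAt (fun s => netProb L C m a (update α ℓ (update (α ℓ) t s)))
      (((a ℓ t : ℝ) - (C ℓ : ℝ) * (Real.exp (α ℓ t) / ∑ j, Real.exp (α ℓ j))) *
        netProb L C m a α) (α ℓ t) := by
  have hα := netProb_update L C m a α ℓ (α ℓ)
  rw [update_eq_self] at hα
  simp only [netProb_update, hα, ← mul_assoc]
  exact (layerProb_hasDerivAt _ _ _ _ t).mul_const _

theorem expectedLoss_hasDerivAt_general (L : ℕ) (C m : Fin L → ℕ)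
    (A : Finset ((ℓ : Fin L) → Fin (m ℓ) → ℕ))
    (Loss : ((ℓ : Fin L) → Fin (m ℓ) → ℕ) → ℝ)
    (ℓ : Fin L) (t : Fin (m ℓ)) (α : (ℓ : Fin L) → Fin (m ℓ) → ℝ) :
    HasDerivAt (fun s : ℝ =>
      ∑ a ∈ A, netProb L C m a (Function.update α ℓ (Function.update (α ℓ) t s)) * Loss a)
      (∑ a ∈ A, Loss a *
        ((a ℓ t : ℝ) - (C ℓ : ℝ) * (Real.exp (α ℓ t) / ∑ j, Real.exp (α ℓ j))) *
        netProb L C m a α)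
      (α ℓ t) :=
  HasDerivAt.fun_sum fun a _ =>
    ((netProb_hasDerivAt L C m a α ℓ t).mul_const (Loss a)).congr_deriv (by ring)

/-- Let `A` be the finite set of all network configurations and
`J(α) = ∑ a ∈ A, p(a | α) · ℒ(a)` the expected loss. Then the partial derivative
of `J` with respect to coordinate `α ℓ t` exists and equals
`∑ a ∈ A, ℒ(a) · (a ℓ t − C ℓ · p ℓ t (α ℓ)) · p(a | α)`. -/
theorem expectedLoss_hasDerivAt (L : ℕ) (hL : 1 ≤ L) (C m : Fin L → ℕ)
    (hm : ∀ ℓ, 1 ≤ m ℓ)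
    (A : Finset ((ℓ : Fin L) → Fin (m ℓ) → ℕ))
    (hA : ∀ a, a ∈ A ↔ ∀ ℓ, ∑ k, a ℓ k = C ℓ)
    (Loss : ((ℓ : Fin L) → Fin (m ℓ) → ℕ) → ℝ)
    (ℓ : Fin L) (t : Fin (m ℓ)) (α : (ℓ : Fin L) → Fin (m ℓ) → ℝ) :
    HasDerivAt (fun s : ℝ =>
      ∑ a ∈ A, netProb L C m a (Function.update α ℓ (Function.update (α ℓ) t s)) * Loss a)
      (∑ a ∈ A, Loss a *
        ((a ℓ t : ℝ) - (C ℓ : ℝ) * (Real.exp (α ℓ t) / ∑ j, Real.exp (α ℓ j))) *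
        netProb L C m a α)
      (α ℓ t) :=
  expectedLoss_hasDerivAt_general L C m A Loss ℓ t α
end

section
/- Under the hypotheses of the multinomial expected-loss setting (L layers, configurations A, loss ℒ : A → ℝ, probabilities p(a | α) given by products of softmax-parameterized multinomials, J(α) = ∑_{a ∈ A} p(a | α) · ℒ(a)), for every layer ℓ, index t, and parameters α, the expectation over a random configuration a distributed according to p(· | α) of the quantity ℒ(a) · (a_{ℓ,t} − C_ℓ · p_{ℓ,t}(α_ℓ)) equals the partial derivative of J with respect to α_{ℓ,t}; that is, the single-sample gradient estimator ℒ(a) · (a_{ℓ,t} − C_ℓ · p_{ℓ,t}(α_ℓ)) is an unbiased estimator of ∂J/∂α_{ℓ,t}. -/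
open Finset

/-!
The log-derivative trick. Differentiating `J` under the finite sum, it suffices that
`∂p(a | α)/∂α_{ℓ,t} = p(a | α) · (a_{ℓ,t} − C_ℓ p_{ℓ,t}(α_ℓ))`. Only the `ℓ`-th factor of
`p(a | α)` depends on `α_{ℓ,t}`, so the logarithmic derivative of `p(a | α)` is that of the
multinomial `C_ℓ! / ∏ a_k! · exp(∑ α_k a_k) / (∑ exp α_j)^{C_ℓ}`, namely
`a_{ℓ,t} − C_ℓ · exp α_t / ∑ exp α_j`.
-/

theorem HasDerivAt.exp_div_pow {f g : ℝ → ℝ} {f' g' x : ℝ} (hf : HasDerivAt f f' x)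
    (hg : HasDerivAt g g' x) (hx : g x ≠ 0) (n : ℕ) :
    HasDerivAt (fun s => Real.exp (f s) / g s ^ n)
      (Real.exp (f x) / g x ^ n * (f' - n * (g' / g x))) x := by
  refine (hf.exp.div (hg.pow n) (pow_ne_zero n hx)).congr_deriv ?_
  cases n with
  | zero => simp
  | succ n =>
    simp only [Nat.add_sub_cancel, Pi.pow_apply]
    field_simp
    ring

theorem hasDerivAt_sum_update_s4 {ι : Type*} [Fintype ι] [DecidableEq ι] (φ : ι → ℝ → ℝ)
    (y : ι → ℝ) (i₀ : ι) {d : ℝ} (h : HasDerivAt (φ i₀) d (y i₀)) :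
    HasDerivAt (fun s => ∑ i, φ i (Function.update y i₀ s i)) d (y i₀) := by
  simp_rw [Function.apply_update φ, sum_update_of_mem (mem_univ i₀)]
  exact h.add_const _

theorem hasDerivAt_prod_update {ι : Type*} [Fintype ι] [DecidableEq ι] {β : ι → Type*}
    (F : (i : ι) → β i → ℝ) (y : (i : ι) → β i) (i₀ : ι) {v : ℝ → β i₀} {e x : ℝ}
    (hv : HasDerivAt (fun s => F i₀ (v s)) (F i₀ (y i₀) * e) x) :
    HasDerivAt (fun s => ∏ i, F i (Function.update y i₀ (v s) i)) ((∏ i, F i (y i)) * e) x := by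
  have hsplit : ∀ w, ∏ i, F i (Function.update y i₀ w i) = F i₀ w * ∏ i ∈ univ \ {i₀}, F i (y i) :=
    fun w => by simp_rw [Function.apply_update F, prod_update_of_mem (mem_univ i₀)]
  have hy := hsplit (y i₀)
  rw [Function.update_eq_self] at hy
  simp_rw [hsplit, hy]
  exact (hv.mul_const _).congr_deriv (by ring)

theorem hasDerivAt_layerProb_update (Cl ml : ℕ) (a : Fin ml → ℕ) (αl : Fin ml → ℝ)
    (t : Fin ml) :
    HasDerivAt (fun s => layerProb Cl ml a (Function.update αl t s))
      (layerProb Cl ml a αl *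
        ((a t : ℝ) - (Cl : ℝ) * (Real.exp (αl t) / ∑ j, Real.exp (αl j)))) (αl t) := by
  have hexponent := hasDerivAt_sum_update_s4 (fun k w => w * (a k : ℝ)) αl t
    ((hasDerivAt_id _).mul_const _)
  have hpartition := hasDerivAt_sum_update_s4 (fun _ => Real.exp) αl t (Real.hasDerivAt_exp _)
  have hpos : (∑ j, Real.exp (Function.update αl t (αl t) j)) ≠ 0 := by
    rw [Function.update_eq_self]
    exact (sum_pos (fun j _ => Real.exp_pos _) ⟨t, mem_univ t⟩).ne'
  have := (hexponent.exp_div_pow hpartition hpos Cl).const_mul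
    ((Cl.factorial : ℝ) / ∏ k, ((a k).factorial : ℝ))
  simp only [Function.update_eq_self, one_mul] at this
  simp only [layerProb, mul_div_assoc]
  exact this.congr_deriv (by ring)

theorem hasDerivAt_netProb_update (L : ℕ) (C m : Fin L → ℕ)
    (a : (ℓ : Fin L) → Fin (m ℓ) → ℕ) (α : (ℓ : Fin L) → Fin (m ℓ) → ℝ)
    (ℓ : Fin L) (t : Fin (m ℓ)) :
    HasDerivAt (fun s => netProb L C m a (Function.update α ℓ (Function.update (α ℓ) t s)))
      (netProb L C m a α *
        ((a ℓ t : ℝ) - (C ℓ : ℝ) * (Real.exp (α ℓ t) / ∑ j, Real.exp (α ℓ j)))) (α ℓ t) :=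
  hasDerivAt_prod_update (fun r => layerProb (C r) (m r) (a r)) α ℓ
    (hasDerivAt_layerProb_update (C ℓ) (m ℓ) (a ℓ) (α ℓ) t)

theorem gradient_estimator_unbiased_general (L : ℕ) (C m : Fin L → ℕ)
    (A : Finset ((ℓ : Fin L) → Fin (m ℓ) → ℕ))
    (Loss : ((ℓ : Fin L) → Fin (m ℓ) → ℕ) → ℝ)
    (ℓ : Fin L) (t : Fin (m ℓ)) (α : (ℓ : Fin L) → Fin (m ℓ) → ℝ) :
    HasDerivAt (fun s : ℝ =>
      ∑ a ∈ A, netProb L C m a (Function.update α ℓ (Function.update (α ℓ) t s)) * Loss a)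
      (∑ a ∈ A, netProb L C m a α *
        (Loss a *
          ((a ℓ t : ℝ) - (C ℓ : ℝ) * (Real.exp (α ℓ t) / ∑ j, Real.exp (α ℓ j)))))
      (α ℓ t) :=
  HasDerivAt.fun_sum fun a _ =>
    ((hasDerivAt_netProb_update L C m a α ℓ t).mul_const (Loss a)).congr_deriv (by ring)

/-- The expectation, over a random configuration `a ~ p(· | α)`, of the
single-sample gradient estimator `ℒ(a) · (a ℓ t − C ℓ · p ℓ t (α ℓ))` equals the
partial derivative of the expected loss `J(α) = ∑ a ∈ A, p(a | α) · ℒ(a)` with respect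
to `α ℓ t`; i.e., the estimator is unbiased. -/
theorem gradient_estimator_unbiased (L : ℕ) (hL : 1 ≤ L) (C m : Fin L → ℕ)
    (hm : ∀ ℓ, 1 ≤ m ℓ)
    (A : Finset ((ℓ : Fin L) → Fin (m ℓ) → ℕ))
    (hA : ∀ a, a ∈ A ↔ ∀ ℓ, ∑ k, a ℓ k = C ℓ)
    (Loss : ((ℓ : Fin L) → Fin (m ℓ) → ℕ) → ℝ)
    (ℓ : Fin L) (t : Fin (m ℓ)) (α : (ℓ : Fin L) → Fin (m ℓ) → ℝ) :
    HasDerivAt (fun s : ℝ =>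
      ∑ a ∈ A, netProb L C m a (Function.update α ℓ (Function.update (α ℓ) t s)) * Loss a)
      (∑ a ∈ A, netProb L C m a α *
        (Loss a *
          ((a ℓ t : ℝ) - (C ℓ : ℝ) * (Real.exp (α ℓ t) / ∑ j, Real.exp (α ℓ j)))))
      (α ℓ t) :=
  gradient_estimator_unbiased_general L C m A Loss ℓ t α
end

section
/- Under the hypotheses of the binomial expected-loss setting (L layers, finite configuration set A, loss ℒ : A → ℝ, probabilities p(a | α) given by products of sigmoid-parameterized binomials, J(α) = ∑_{a ∈ A} p(a | α) · ℒ(a)), for every layer ℓ and parameters α, the expectation over a random configuration a distributed according to p(· | α) of the quantity ℒ(a) · (a_ℓ − (C_ℓ−1) · p_ℓ(α_ℓ)) equals the partial derivative of J with respect to α_ℓ; that is, this quantity is an unbiased single-sample estimator of ∂J/∂α_ℓ. -/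
/-!
This is the score-function (log-derivative) identity `∂p = p · ∂ log p`. Only the `ℓ`-th factor
of `p(a | α)` depends on `α ℓ`, and the logarithm of that factor is
`α ℓ · a ℓ − (C ℓ − 1) · log (exp (α ℓ) + 1)` up to a constant, whose derivative is
`a ℓ − (C ℓ − 1) · σ(α ℓ)`. The expected loss is a finite sum, so it is differentiated termwise.
-/

open Finset

/-- The binomial probability of sampling `a` filters in a layer with `Cl` filters,
parameterized via the sigmoid `p(α) = exp α / (exp α + 1)`. -/
noncomputable def binomialLayerProb (Cl : ℕ) (a : ℕ) (α : ℝ) : ℝ :=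
  (((Cl - 1).factorial : ℝ) / ((a.factorial : ℝ) * (((Cl - 1) - a).factorial : ℝ))) *
    Real.exp (α * a) / (Real.exp α + 1) ^ (Cl - 1)

/-- The network configuration probability: the product of the layer probabilities. -/
noncomputable def binomialNetProb (L : ℕ) (C : Fin L → ℕ) (a : Fin L → ℕ)
    (α : Fin L → ℝ) : ℝ :=
  ∏ r, binomialLayerProb (C r) (a r) (α r)

theorem hasDerivAt_exp_mul_div_exp_add_one_pow (k : ℝ) (n : ℕ) (x : ℝ) :
    HasDerivAt (fun s : ℝ => Real.exp (s * k) / (Real.exp s + 1) ^ n)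
      (Real.exp (x * k) / (Real.exp x + 1) ^ n *
        (k - n * (Real.exp x / (Real.exp x + 1)))) x := by
  have hnum : HasDerivAt (fun s : ℝ => Real.exp (s * k)) (Real.exp (x * k) * (1 * k)) x :=
    ((hasDerivAt_id x).mul_const k).exp
  have hden : HasDerivAt (fun s : ℝ => (Real.exp s + 1) ^ n)
      (n * (Real.exp x + 1) ^ (n - 1) * Real.exp x) x := by
    simpa using ((Real.hasDerivAt_exp x).add_const 1).fun_pow n
  have hpos : 0 < Real.exp x + 1 := by positivity
  refine (hnum.fun_div hden (pow_ne_zero _ hpos.ne')).congr_deriv ?_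
  rcases n with _ | m
  · simp
  · rw [Nat.add_sub_cancel, pow_succ]
    field_simp

theorem hasDerivAt_binomialLayerProb (Cl k : ℕ) (x : ℝ) :
    HasDerivAt (binomialLayerProb Cl k)
      (binomialLayerProb Cl k x *
        (k - ((Cl - 1 : ℕ) : ℝ) * (Real.exp x / (Real.exp x + 1)))) x := by
  unfold binomialLayerProb
  simp only [mul_div_assoc]
  simpa only [mul_assoc] using (hasDerivAt_exp_mul_div_exp_add_one_pow k (Cl - 1) x).const_mul _

theorem hasDerivAt_prod_update_of_logDeriv {ι : Type*} [Fintype ι] [DecidableEq ι]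
    (f : ι → ℝ → ℝ) (x : ι → ℝ) (i : ι) {d : ℝ} (hf : HasDerivAt (f i) (f i (x i) * d) (x i)) :
    HasDerivAt (fun s => ∏ j, f j (Function.update x i s j)) ((∏ j, f j (x j)) * d) (x i) := by
  have hsplit : ∀ s, ∏ j, f j (Function.update x i s j) =
      f i s * ∏ j ∈ univ \ {i}, f j (x j) := fun s => by
    simp only [Function.apply_update f, prod_update_of_mem (mem_univ i)]
  simp only [hsplit]
  refine (hf.mul_const _).congr_deriv ?_
  rw [← mul_prod_erase univ _ (mem_univ i), sdiff_singleton_eq_erase]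
  ring

theorem hasDerivAt_binomialNetProb_update (L : ℕ) (C : Fin L → ℕ) (a : Fin L → ℕ)
    (ℓ : Fin L) (α : Fin L → ℝ) :
    HasDerivAt (fun s => binomialNetProb L C a (Function.update α ℓ s))
      (binomialNetProb L C a α *
        ((a ℓ : ℝ) - ((C ℓ - 1 : ℕ) : ℝ) * (Real.exp (α ℓ) / (Real.exp (α ℓ) + 1)))) (α ℓ) :=
  hasDerivAt_prod_update_of_logDeriv (fun r => binomialLayerProb (C r) (a r)) α ℓ
    (hasDerivAt_binomialLayerProb (C ℓ) (a ℓ) (α ℓ))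

theorem binomial_gradient_estimator_unbiased_general (L : ℕ) (C : Fin L → ℕ)
    (A : Finset (Fin L → ℕ))
    (Loss : (Fin L → ℕ) → ℝ)
    (ℓ : Fin L) (α : Fin L → ℝ) :
    HasDerivAt (fun s : ℝ =>
      ∑ a ∈ A, binomialNetProb L C a (Function.update α ℓ s) * Loss a)
      (∑ a ∈ A, binomialNetProb L C a α *
        (Loss a *
          ((a ℓ : ℝ) - ((C ℓ - 1 : ℕ) : ℝ) * (Real.exp (α ℓ) / (Real.exp (α ℓ) + 1)))))
      (α ℓ) := by
  refine HasDerivAt.fun_sum fun a _ => ?_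
  refine ((hasDerivAt_binomialNetProb_update L C a ℓ α).mul_const (Loss a)).congr_deriv ?_
  ring

/-- The expectation, over a random configuration `a ~ p(· | α)`, of the
single-sample gradient estimator `ℒ(a) · (a ℓ − (C ℓ − 1) · p ℓ (α ℓ))` equals the
partial derivative of the expected loss `J(α) = ∑ a ∈ A, p(a | α) · ℒ(a)` with respect
to `α ℓ`; i.e., the estimator is unbiased. -/
theorem binomial_gradient_estimator_unbiased (L : ℕ) (hL : 1 ≤ L) (C : Fin L → ℕ)
    (hC : ∀ ℓ, 1 ≤ C ℓ)
    (A : Finset (Fin L → ℕ))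
    (hA : ∀ a : Fin L → ℕ, a ∈ A ↔ ∀ ℓ, a ℓ ≤ C ℓ - 1)
    (Loss : (Fin L → ℕ) → ℝ)
    (ℓ : Fin L) (α : Fin L → ℝ) :
    HasDerivAt (fun s : ℝ =>
      ∑ a ∈ A, binomialNetProb L C a (Function.update α ℓ s) * Loss a)
      (∑ a ∈ A, binomialNetProb L C a α *
        (Loss a *
          ((a ℓ : ℝ) - ((C ℓ - 1 : ℕ) : ℝ) * (Real.exp (α ℓ) / (Real.exp (α ℓ) + 1)))))
      (α ℓ) :=
  binomial_gradient_estimator_unbiased_general L C A Loss ℓ α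
end
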